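/- arXiv:2304.05285 — 4 statements merged into one kernel-verified Lean document; each statement's English description precedes it below -/
import Mathlib

section
/- Let μ/ν be a skew shape of length at most n-1, viewed both in S_{n-1} and in S_n. Then the immanant character of S_n satisfies Γ^θ_{μ/ν} = (Γ^θ_{μ/ν})↑_{S_{n-1}}^{S_n}, i.e. the S_n-immanant character is the induced character of the S_{n-1}-immanant character. In particular, for w ∈ S_n whose conjugacy class meets S_{n-1}, if v ∈ S_{n-1} is conjugate to w in S_n then Γ^θ_{μ/ν}(w) (computed in S_n with δ^n) equals the induced character value, and if C_n(w) ∩ S_{n-1} = ∅ then Γ^θ_{μ/ν}(w) = 0. -/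
open Equiv

/-- `T i j` is the entry of a filling in row `i`, column `j` (0-based);
entries outside the diagram of `shape` are `0`.  Rows weakly increase,
columns strictly increase. -/
def IsSSYT (shape : ℕ → ℕ) (T : ℕ → ℕ → ℕ) : Prop :=
  (∀ i j, j + 1 < shape i → T i j ≤ T i (j + 1)) ∧
  (∀ i j, j < shape (i + 1) → T i j < T (i + 1) j) ∧
  (∀ i j, shape i ≤ j → T i j = 0)

/-- The Kostka number: the number of semistandard Young tableaux of the given
shape in which the entry `m` appears exactly `c m` times. -/
noncomputable def kostka (shape : ℕ → ℕ) (c : ℕ → ℕ) : ℕ :=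
  Set.ncard {T : ℕ → ℕ → ℕ | IsSSYT shape T ∧
    ∀ m : ℕ, {p : ℕ × ℕ | p.2 < shape p.1 ∧ T p.1 p.2 = m}.ncard = c m}

open Classical in
/-- Kostka number for an integer content, with the convention that it is `0`
whenever the content has a negative entry. -/
noncomputable def kostkaZ (shape : ℕ → ℕ) (c : ℕ → ℤ) : ℕ :=
  if ∀ m, 0 ≤ c m then kostka shape (fun m => (c m).toNat) else 0

/-- The hook shape `(N - k, 1, ..., 1)` with `k` trailing rows of length 1. -/
def hookShape (N k : ℕ) : ℕ → ℕ :=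
  fun i => if i = 0 then N - k else if i ≤ k then 1 else 0

/-- Extend a sequence indexed by `Fin n` to all of `ℕ` by zeros. -/
def extendSeq {n : ℕ} (a : Fin n → ℤ) : ℕ → ℤ :=
  fun m => if h : m < n then a ⟨m, h⟩ else 0

/-- The staircase `δ = (n-1, n-2, ..., 1, 0)`. -/
def deltaSeq (n : ℕ) : Fin n → ℤ := fun i => (n : ℤ) - 1 - (i.val : ℤ)

/-- The sequence `μ + δ - w(ν + δ)`, where a permutation acts on sequences by
shuffling: `(w(a))_i = a_{w⁻¹(i)}`. -/
def hatSeq {n : ℕ} (μ ν : Fin n → ℕ) (w : Perm (Fin n)) : Fin n → ℤ :=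
  fun i => ((μ i : ℤ) + deltaSeq n i) - ((ν (w⁻¹ i) : ℤ) + deltaSeq n (w⁻¹ i))

/-- `h` is the Hessenberg function of the skew shape `μ/ν`:
`h j = max { i | μ i - ν j + j - i ≥ 0 }`. -/
def IsHessOf {n : ℕ} (μ ν : Fin n → ℕ) (h : Fin n → Fin n) : Prop :=
  ∀ j : Fin n, (ν j + ((h j : ℕ)) ≤ μ (h j) + (j : ℕ)) ∧
    ∀ i : Fin n, ν j + (i : ℕ) ≤ μ i + (j : ℕ) → i ≤ h j

/-- The indicator `ĥ(w)` of the condition `w(i) ≤ h(i)` for all `i`. -/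
def hhat {n : ℕ} (h : Fin n → Fin n) (w : Perm (Fin n)) : ℕ :=
  if ∀ i, w i ≤ h i then 1 else 0

/-- The modified Hessenberg function `h^J`: `h^J(i) = h(i) - 1` when `i ∈ J` and
`μ_{h(i)} - ν_i + i - h(i) = 0`, and `h^J(i) = h(i)` otherwise. -/
def hJfun {n : ℕ} (μ ν : Fin n → ℕ) (h : Fin n → Fin n) (J : Finset (Fin n)) :
    Fin n → Fin n :=
  fun i => if i ∈ J ∧ μ (h i) + (i : ℕ) = ν i + ((h i : ℕ)) then
      ⟨(h i : ℕ) - 1, Nat.lt_of_le_of_lt (Nat.sub_le _ _) (h i).isLt⟩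
    else h i

open Classical in
/-- The conjugacy class of `w` in the symmetric group, as a finset. -/
noncomputable def conjClass {n : ℕ} (w : Perm (Fin n)) : Finset (Perm (Fin n)) :=
  Finset.univ.filter (fun v => IsConj w v)

/-- The Stanley–Stembridge character
`Γ_h(w) = (n! / |C(w)|) · Σ_{w' ∈ C(w)} ĥ(w')`. -/
noncomputable def GammaH {n : ℕ} (h : Fin n → Fin n) (w : Perm (Fin n)) : ℚ :=
  ((n.factorial : ℚ) / ((conjClass w).card : ℚ)) * ∑ v ∈ conjClass w, (hhat h v : ℚ)

/-- The immanant character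
`Γ^θ_{μ/ν}(w) = (n! / |C(w)|) · Σ_{w' ∈ C(w)} K_{θ, μ+δ-w'(ν+δ)}`. -/
noncomputable def GammaTheta {n : ℕ} (shape : ℕ → ℕ) (μ ν : Fin n → ℕ)
    (w : Perm (Fin n)) : ℚ :=
  ((n.factorial : ℚ) / ((conjClass w).card : ℚ)) *
    ∑ v ∈ conjClass w, (kostkaZ shape (extendSeq (hatSeq μ ν v)) : ℚ)


namespace Stmt13Aux

/-- Embed `Perm (Fin n)` into `Perm (Fin (n+1))`, fixing the last point. -/
def embP {n : ℕ} (v : Perm (Fin n)) : Perm (Fin (n + 1)) where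
  toFun := Fin.lastCases (Fin.last n) (fun j => (v j).castSucc)
  invFun := Fin.lastCases (Fin.last n) (fun j => (v⁻¹ j).castSucc)
  left_inv := by
    intro i
    induction i using Fin.lastCases with
    | last => simp
    | cast j => simp
  right_inv := by
    intro i
    induction i using Fin.lastCases with
    | last => simp
    | cast j => simp

@[simp] lemma embP_castSucc {n : ℕ} (v : Perm (Fin n)) (j : Fin n) :
    embP v j.castSucc = (v j).castSucc := by
  simp [embP]

@[simp] lemma embP_last {n : ℕ} (v : Perm (Fin n)) :
    embP v (Fin.last n) = Fin.last n := by
  simp [embP]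

@[simp] lemma embP_inv {n : ℕ} (v : Perm (Fin n)) : (embP v)⁻¹ = embP v⁻¹ := rfl

lemma embP_mul {n : ℕ} (a b : Perm (Fin n)) : embP (a * b) = embP a * embP b := by
  ext i
  induction i using Fin.lastCases with
  | last => simp [Perm.mul_apply]
  | cast j => simp [Perm.mul_apply]

lemma embP_injective {n : ℕ} : Function.Injective (embP (n := n)) := by
  intro a b h
  ext j
  have := congrArg (fun u : Perm (Fin (n+1)) => u j.castSucc) h
  simp only [embP_castSucc, Fin.castSucc_inj] at this
  exact congrArg Fin.val this

lemma isConj_embP {n : ℕ} {a b : Perm (Fin n)} (h : IsConj a b) :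
    IsConj (embP a) (embP b) := by
  obtain ⟨c, hc⟩ := isConj_iff.mp h
  refine isConj_iff.mpr ⟨embP c, ?_⟩
  rw [embP_inv, ← embP_mul, ← embP_mul, hc]

lemma exists_embP_eq {n : ℕ} {u : Perm (Fin (n + 1))} (hu : u (Fin.last n) = Fin.last n) :
    ∃ v : Perm (Fin n), embP v = u := by
  have hu' : u⁻¹ (Fin.last n) = Fin.last n := by
    conv_lhs => rw [← hu]
    simp
  have h1 : ∀ j : Fin n, u j.castSucc ≠ Fin.last n := by
    intro j h
    have := u.injective (h.trans hu.symm)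
    exact (Fin.castSucc_lt_last j).ne this
  have h2 : ∀ j : Fin n, u⁻¹ j.castSucc ≠ Fin.last n := by
    intro j h
    have := u⁻¹.injective (h.trans hu'.symm)
    exact (Fin.castSucc_lt_last j).ne this
  refine ⟨⟨fun j => (u j.castSucc).castPred (h1 j),
    fun j => (u⁻¹ j.castSucc).castPred (h2 j), ?_, ?_⟩, ?_⟩
  · intro j
    simp [Fin.castSucc_castPred]
  · intro j
    simp [Fin.castSucc_castPred]
  · ext i
    induction i using Fin.lastCases with
    | last => simp [hu]
    | cast j =>
      simp [Equiv.coe_fn_mk, Fin.castSucc_castPred]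


lemma kostkaZ_vanish {n : ℕ} (μ ν : Fin (n + 1) → ℕ) (hν : Antitone ν)
    (hlen : μ (Fin.last n) = ν (Fin.last n)) (shape : ℕ → ℕ)
    {u : Perm (Fin (n + 1))} (hu : u (Fin.last n) ≠ Fin.last n) :
    kostkaZ shape (extendSeq (hatSeq μ ν u)) = 0 := by
  rw [kostkaZ, if_neg]
  push_neg
  refine ⟨n, ?_⟩
  have hn : n < n + 1 := n.lt_succ_self
  have hidx : (⟨n, hn⟩ : Fin (n + 1)) = Fin.last n := rfl
  rw [extendSeq, dif_pos hn, hidx]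
  set j : Fin (n + 1) := u⁻¹ (Fin.last n) with hj
  have hjne : j ≠ Fin.last n := by
    intro h
    apply hu
    have : u j = Fin.last n := by simp [hj]
    rwa [h] at this
  have hjlt : (j : ℕ) < n := by
    have h1 := j.isLt
    have h2 : (j : ℕ) ≠ n := fun h => hjne (Fin.ext h)
    omega
  have hνle : ν (Fin.last n) ≤ ν j := hν (Fin.le_last j)
  rw [hatSeq, ← hj]
  rw [deltaSeq, deltaSeq]
  have hμν : (μ (Fin.last n) : ℤ) = (ν (Fin.last n) : ℤ) := by exact_mod_cast hlen
  have h1 : (ν (Fin.last n) : ℤ) ≤ (ν j : ℤ) := by exact_mod_cast hνle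
  have h2 : ((j : ℕ) : ℤ) < (n : ℤ) := by exact_mod_cast hjlt
  have h3 : ((Fin.last n : Fin (n + 1)) : ℕ) = n := rfl
  rw [h3]
  push_cast
  linarith

lemma extendSeq_hatSeq_embP {n : ℕ} (μ ν : Fin (n + 1) → ℕ)
    (hlen : μ (Fin.last n) = ν (Fin.last n)) (v : Perm (Fin n)) :
    extendSeq (hatSeq μ ν (embP v)) =
      extendSeq (hatSeq (fun j : Fin n => μ j.castSucc) (fun j : Fin n => ν j.castSucc) v) := by
  funext m
  rw [extendSeq, extendSeq]
  by_cases h : m < n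
  · rw [dif_pos (h.trans n.lt_succ_self), dif_pos h]
    have hidx : (⟨m, h.trans n.lt_succ_self⟩ : Fin (n + 1)) = (⟨m, h⟩ : Fin n).castSucc := rfl
    rw [hidx, hatSeq, hatSeq]
    have hinv : (embP v)⁻¹ ((⟨m, h⟩ : Fin n).castSucc) = (v⁻¹ ⟨m, h⟩).castSucc := by
      rw [embP_inv, embP_castSucc]
    rw [hinv, deltaSeq, deltaSeq, deltaSeq, deltaSeq]
    have e1 : (((⟨m, h⟩ : Fin n).castSucc : ℕ) : ℤ) = (m : ℤ) := rfl
    have e2 : (((v⁻¹ ⟨m, h⟩ : Fin n).castSucc : ℕ) : ℤ) = ((v⁻¹ ⟨m, h⟩ : Fin n) : ℕ) := rfl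
    rw [e1, e2]
    push_cast
    ring
  · by_cases h' : m < n + 1
    · rw [dif_pos h', dif_neg h]
      have hm : m = n := by omega
      subst hm
      have hidx : (⟨m, h'⟩ : Fin (m + 1)) = Fin.last m := rfl
      rw [hidx, hatSeq]
      have hinv : (embP v)⁻¹ (Fin.last m) = Fin.last m := by
        rw [embP_inv, embP_last]
      rw [hinv]
      have : (μ (Fin.last m) : ℤ) = (ν (Fin.last m) : ℤ) := by exact_mod_cast hlen
      linarith
    · rw [dif_neg h', dif_neg h]

end Stmt13Aux
open Classical in
/-- The number of elements conjugating `w` to `u` equals the centralizer size. -/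
lemma fiber_card_eq {N : ℕ} (w u : Perm (Fin N)) (h : IsConj w u) :
    (Finset.univ.filter (fun x : Perm (Fin N) => x * w * x⁻¹ = u)).card =
      (Finset.univ.filter (fun x : Perm (Fin N) => x * w * x⁻¹ = w)).card := by
  obtain ⟨x₀, hx₀⟩ := isConj_iff.mp h
  apply Finset.card_bij' (fun x _ => x₀⁻¹ * x) (fun y _ => x₀ * y)
  · intro a ha
    rw [Finset.mem_filter] at ha ⊢
    refine ⟨Finset.mem_univ _, ?_⟩
    have h2 := ha.2.trans hx₀.symm
    have : x₀⁻¹ * (a * w * a⁻¹) * x₀ = x₀⁻¹ * (x₀ * w * x₀⁻¹) * x₀ := by rw [h2]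
    simpa [mul_assoc, mul_inv_rev] using this
  · intro a ha
    rw [Finset.mem_filter] at ha ⊢
    refine ⟨Finset.mem_univ _, ?_⟩
    have h2 := ha.2
    have : x₀ * (a * w * a⁻¹) * x₀⁻¹ = x₀ * w * x₀⁻¹ := by rw [h2]
    rw [hx₀] at this
    simpa [mul_assoc, mul_inv_rev] using this
  · intro a _; simp [mul_assoc]
  · intro a _; simp [mul_assoc]

open Classical in
lemma conj_image_eq {N : ℕ} (w : Perm (Fin N)) :
    (Finset.univ : Finset (Perm (Fin N))).image (fun x => x * w * x⁻¹) = conjClass w := by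
  ext u
  simp [conjClass, isConj_iff]

open Classical in
lemma sum_conjAct {N : ℕ} (w : Perm (Fin N)) (f : Perm (Fin N) → ℚ) :
    ∑ x : Perm (Fin N), f (x * w * x⁻¹) =
      ∑ u ∈ conjClass w,
        ((Finset.univ.filter (fun x : Perm (Fin N) => x * w * x⁻¹ = w)).card : ℚ) * f u := by
  rw [Finset.sum_comp f (fun x : Perm (Fin N) => x * w * x⁻¹), conj_image_eq]
  refine Finset.sum_congr rfl ?_
  intro u hu
  rw [conjClass, Finset.mem_filter] at hu
  rw [fiber_card_eq w u hu.2, nsmul_eq_mul]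

open Classical in
lemma card_conj_mul {N : ℕ} (w : Perm (Fin N)) :
    (conjClass w).card *
      (Finset.univ.filter (fun x : Perm (Fin N) => x * w * x⁻¹ = w)).card = N.factorial := by
  have key : N.factorial = ∑ u ∈ conjClass w,
      (Finset.univ.filter (fun x : Perm (Fin N) => x * w * x⁻¹ = u)).card := by
    calc N.factorial = (Finset.univ : Finset (Perm (Fin N))).card := by
          simp [Finset.card_univ, Fintype.card_perm, Fintype.card_fin]
      _ = _ := by
          rw [Finset.card_eq_sum_card_image (fun x : Perm (Fin N) => x * w * x⁻¹), conj_image_eq]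
  rw [key]
  have hfib : ∀ u ∈ conjClass w,
      (Finset.univ.filter (fun x : Perm (Fin N) => x * w * x⁻¹ = u)).card =
      (Finset.univ.filter (fun x : Perm (Fin N) => x * w * x⁻¹ = w)).card := fun u hu => by
    rw [conjClass, Finset.mem_filter] at hu
    exact fiber_card_eq w u hu.2
  rw [Finset.sum_congr rfl hfib, Finset.sum_const, smul_eq_mul]
open Classical in
lemma conjClass_ne {n : ℕ} (v : Perm (Fin n)) : ((conjClass v).card : ℚ) ≠ 0 := by
  have hv : v ∈ conjClass v := by
    simp only [conjClass, Finset.mem_filter, Finset.mem_univ, true_and]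
    exact IsConj.refl v
  have h1 : 0 < (conjClass v).card := Finset.card_pos.mpr ⟨v, hv⟩
  exact_mod_cast h1.ne'

open Classical in
lemma conjClass_congr {n : ℕ} {a b : Perm (Fin n)} (hab : IsConj a b) :
    conjClass a = conjClass b := by
  ext u
  simp only [conjClass, Finset.mem_filter, Finset.mem_univ, true_and]
  exact ⟨fun h => hab.symm.trans h, fun h => hab.trans h⟩

open Classical in
lemma sum_gamma {n : ℕ} (shape : ℕ → ℕ) (μ' ν' : Fin n → ℕ)
    (P : Perm (Fin n) → Prop) [DecidablePred P] (hP : ∀ a b, P a → IsConj a b → P b) :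
    ∑ v ∈ Finset.univ.filter P, GammaTheta shape μ' ν' v =
      (n.factorial : ℚ) * ∑ v ∈ Finset.univ.filter P,
        (kostkaZ shape (extendSeq (hatSeq μ' ν' v)) : ℚ) := by
  set k : Perm (Fin n) → ℚ := fun v => (kostkaZ shape (extendSeq (hatSeq μ' ν' v)) : ℚ) with hk
  calc ∑ v ∈ Finset.univ.filter P, GammaTheta shape μ' ν' v
      = ∑ v ∈ Finset.univ.filter P, ∑ v' ∈ conjClass v,
          ((n.factorial : ℚ) / ((conjClass v).card : ℚ)) * k v' := by
        refine Finset.sum_congr rfl fun v _ => ?_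
        rw [GammaTheta, Finset.mul_sum]
    _ = ∑ v ∈ Finset.univ.filter P, ∑ v' : Perm (Fin n),
          if IsConj v v' then ((n.factorial : ℚ) / ((conjClass v').card : ℚ)) * k v' else 0 := by
        refine Finset.sum_congr rfl fun v _ => ?_
        rw [conjClass, Finset.sum_filter]
        refine Finset.sum_congr rfl fun v' _ => ?_
        by_cases h : IsConj v v'
        · rw [if_pos h, if_pos h]
          have hcc : (Finset.filter (fun u => IsConj v u) Finset.univ).card
              = (conjClass v').card := by
            rw [← conjClass]
            exact congrArg Finset.card (conjClass_congr h)
          rw [hcc]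
        · rw [if_neg h, if_neg h]
    _ = ∑ v' : Perm (Fin n), ∑ v ∈ Finset.univ.filter P,
          if IsConj v v' then ((n.factorial : ℚ) / ((conjClass v').card : ℚ)) * k v' else 0 :=
        Finset.sum_comm
    _ = ∑ v' : Perm (Fin n), if P v' then (n.factorial : ℚ) * k v' else 0 := by
        refine Finset.sum_congr rfl fun v' _ => ?_
        by_cases hp : P v'
        · rw [if_pos hp, ← Finset.sum_filter]
          have hflt : (Finset.univ.filter P).filter (fun v => IsConj v v') = conjClass v' := by
            ext a
            simp only [Finset.mem_filter, Finset.mem_univ, true_and, conjClass]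
            constructor
            · rintro ⟨_, h2⟩; exact h2.symm
            · intro h; exact ⟨hP v' a hp h, h.symm⟩
          rw [hflt, Finset.sum_const, nsmul_eq_mul]
          have h0 := conjClass_ne v'
          field_simp
        · rw [if_neg hp]
          refine Finset.sum_eq_zero fun v hv => ?_
          rw [Finset.mem_filter] at hv
          rw [if_neg (fun h => hp (hP v v' hv.2 h))]
    _ = (n.factorial : ℚ) * ∑ v ∈ Finset.univ.filter P, k v := by
        rw [← Finset.sum_filter, Finset.mul_sum]

open Classical in
lemma sum_gamma_ite {n : ℕ} (shape : ℕ → ℕ) (μ' ν' : Fin n → ℕ)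
    (P : Perm (Fin n) → Prop) [DecidablePred P] (hP : ∀ a b, P a → IsConj a b → P b) :
    ∑ v : Perm (Fin n), (if P v then GammaTheta shape μ' ν' v else 0) =
      (n.factorial : ℚ) * ∑ v : Perm (Fin n),
        (if P v then (kostkaZ shape (extendSeq (hatSeq μ' ν' v)) : ℚ) else 0) := by
  rw [← Finset.sum_filter, ← Finset.sum_filter, sum_gamma shape μ' ν' P hP]
open Classical in
/-- Proposition A.3: for a skew shape of length at most `n`
(padded to length `n+1`), the immanant character of `S_{n+1}` is induced from
the immanant character of `S_n`; in particular it vanishes on conjugacy classes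
not meeting `S_n`. -/
theorem stmt13 {n : ℕ} (μ ν : Fin (n + 1) → ℕ) (hμ : Antitone μ) (hν : Antitone ν)
    (hle : ∀ j, ν j ≤ μ j) (hlen : μ (Fin.last n) = ν (Fin.last n))
    (shape : ℕ → ℕ) (hshape : Antitone shape) (w : Perm (Fin (n + 1))) :
    (GammaTheta shape μ ν w =
      (1 / (n.factorial : ℚ)) * ∑ x : Perm (Fin (n + 1)), ∑ v : Perm (Fin n),
        (if (∀ j : Fin n, (x * w * x⁻¹) j.castSucc = (v j).castSucc) ∧
            (x * w * x⁻¹) (Fin.last n) = Fin.last n then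
          GammaTheta shape (fun j : Fin n => μ j.castSucc)
            (fun j : Fin n => ν j.castSucc) v
        else 0)) ∧
    ((∀ v : Perm (Fin (n + 1)), IsConj w v → v (Fin.last n) ≠ Fin.last n) →
      GammaTheta shape μ ν w = 0) := by
  classical
  have hvanish : ∀ u : Perm (Fin (n + 1)), u (Fin.last n) ≠ Fin.last n →
      kostkaZ shape (extendSeq (hatSeq μ ν u)) = 0 :=
    fun u hu => Stmt13Aux.kostkaZ_vanish μ ν hν hlen shape hu
  constructor
  · -- Part 1: the induced-character formula
    have hcond : ∀ (x : Perm (Fin (n + 1))) (v : Perm (Fin n)),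
        ((∀ j : Fin n, (x * w * x⁻¹) j.castSucc = (v j).castSucc) ∧
          (x * w * x⁻¹) (Fin.last n) = Fin.last n) ↔ x * w * x⁻¹ = Stmt13Aux.embP v := by
      intro x v
      constructor
      · rintro ⟨h1, h2⟩
        ext i
        induction i using Fin.lastCases with
        | last => exact congrArg Fin.val (h2.trans (Stmt13Aux.embP_last v).symm)
        | cast j => exact congrArg Fin.val ((h1 j).trans (Stmt13Aux.embP_castSucc v j).symm)
      · intro h
        rw [h]
        exact ⟨fun j => Stmt13Aux.embP_castSucc v j, Stmt13Aux.embP_last v⟩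
    have hPclosed : ∀ a b : Perm (Fin n),
        Stmt13Aux.embP a ∈ conjClass w → IsConj a b → Stmt13Aux.embP b ∈ conjClass w := by
      intro a b ha hab
      rw [conjClass, Finset.mem_filter] at ha ⊢
      exact ⟨Finset.mem_univ _, ha.2.trans (Stmt13Aux.isConj_embP hab)⟩
    have hfac : (n.factorial : ℚ) ≠ 0 := Nat.cast_ne_zero.mpr (Nat.factorial_ne_zero n)
    set z : ℕ := (Finset.univ.filter
      (fun x : Perm (Fin (n + 1)) => x * w * x⁻¹ = w)).card with hz
    refine Eq.symm ?_
    calc (1 / (n.factorial : ℚ)) * ∑ x : Perm (Fin (n + 1)), ∑ v : Perm (Fin n),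
          (if (∀ j : Fin n, (x * w * x⁻¹) j.castSucc = (v j).castSucc) ∧
              (x * w * x⁻¹) (Fin.last n) = Fin.last n then
            GammaTheta shape (fun j : Fin n => μ j.castSucc)
              (fun j : Fin n => ν j.castSucc) v else 0)
        = (1 / (n.factorial : ℚ)) * ∑ x : Perm (Fin (n + 1)),
            ∑ v : Perm (Fin n), (if x * w * x⁻¹ = Stmt13Aux.embP v then
              GammaTheta shape (fun j : Fin n => μ j.castSucc)
                (fun j : Fin n => ν j.castSucc) v else 0) := by
          refine congrArg _ (Finset.sum_congr rfl fun x _ => ?_)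
          refine Finset.sum_congr rfl fun v _ => ?_
          exact if_congr (hcond x v) rfl rfl
      _ = (1 / (n.factorial : ℚ)) * ∑ u ∈ conjClass w, (z : ℚ) *
            ∑ v : Perm (Fin n), (if u = Stmt13Aux.embP v then
              GammaTheta shape (fun j : Fin n => μ j.castSucc)
                (fun j : Fin n => ν j.castSucc) v else 0) := by
          rw [sum_conjAct w (fun u => ∑ v : Perm (Fin n), (if u = Stmt13Aux.embP v then
            GammaTheta shape (fun j : Fin n => μ j.castSucc)
              (fun j : Fin n => ν j.castSucc) v else 0))]
      _ = (1 / (n.factorial : ℚ)) * ((z : ℚ) * ∑ u ∈ conjClass w,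
            ∑ v : Perm (Fin n), (if u = Stmt13Aux.embP v then
              GammaTheta shape (fun j : Fin n => μ j.castSucc)
                (fun j : Fin n => ν j.castSucc) v else 0)) := by
          rw [← Finset.mul_sum]
      _ = (1 / (n.factorial : ℚ)) * ((z : ℚ) *
            ∑ v : Perm (Fin n), (if Stmt13Aux.embP v ∈ conjClass w then
              GammaTheta shape (fun j : Fin n => μ j.castSucc)
                (fun j : Fin n => ν j.castSucc) v else 0)) := by
          rw [Finset.sum_comm]
          refine congrArg _ (congrArg _ (Finset.sum_congr rfl fun v _ => ?_))
          exact Finset.sum_ite_eq' (conjClass w) (Stmt13Aux.embP v) _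
      _ = (1 / (n.factorial : ℚ)) * ((z : ℚ) * ((n.factorial : ℚ) *
            ∑ v : Perm (Fin n), (if Stmt13Aux.embP v ∈ conjClass w then
              (kostkaZ shape (extendSeq (hatSeq (fun j : Fin n => μ j.castSucc)
                (fun j : Fin n => ν j.castSucc) v)) : ℚ) else 0))) := by
          rw [sum_gamma_ite shape (fun j : Fin n => μ j.castSucc)
            (fun j : Fin n => ν j.castSucc) _ hPclosed]
      _ = (z : ℚ) * ∑ v : Perm (Fin n), (if Stmt13Aux.embP v ∈ conjClass w then
            (kostkaZ shape (extendSeq (hatSeq (fun j : Fin n => μ j.castSucc)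
              (fun j : Fin n => ν j.castSucc) v)) : ℚ) else 0) := by
          field_simp
      _ = (z : ℚ) * ∑ v : Perm (Fin n), (if Stmt13Aux.embP v ∈ conjClass w then
            (kostkaZ shape (extendSeq (hatSeq μ ν (Stmt13Aux.embP v))) : ℚ) else 0) := by
          refine congrArg _ (Finset.sum_congr rfl fun v _ => ?_)
          split_ifs with h
          · rw [Stmt13Aux.extendSeq_hatSeq_embP μ ν hlen v]
          · rfl
      _ = (z : ℚ) * ∑ v : Perm (Fin n), ∑ u ∈ conjClass w,
            (if u = Stmt13Aux.embP v then
              (kostkaZ shape (extendSeq (hatSeq μ ν u)) : ℚ) else 0) := by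
          refine congrArg _ (Finset.sum_congr rfl fun v _ => ?_)
          exact (Finset.sum_ite_eq' (conjClass w) (Stmt13Aux.embP v)
            (fun u => (kostkaZ shape (extendSeq (hatSeq μ ν u)) : ℚ))).symm
      _ = (z : ℚ) * ∑ u ∈ conjClass w, ∑ v : Perm (Fin n),
            (if u = Stmt13Aux.embP v then
              (kostkaZ shape (extendSeq (hatSeq μ ν u)) : ℚ) else 0) := by
          rw [Finset.sum_comm]
      _ = (z : ℚ) * ∑ u ∈ conjClass w,
            (kostkaZ shape (extendSeq (hatSeq μ ν u)) : ℚ) := by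
          refine congrArg _ (Finset.sum_congr rfl fun u hu => ?_)
          by_cases hlast : u (Fin.last n) = Fin.last n
          · obtain ⟨v₀, hv₀⟩ := Stmt13Aux.exists_embP_eq hlast
            calc ∑ v : Perm (Fin n), (if u = Stmt13Aux.embP v then
                  (kostkaZ shape (extendSeq (hatSeq μ ν u)) : ℚ) else 0)
                = ∑ v : Perm (Fin n), (if v = v₀ then
                    (kostkaZ shape (extendSeq (hatSeq μ ν u)) : ℚ) else 0) := by
                  refine Finset.sum_congr rfl fun v _ => ?_
                  refine if_congr ⟨fun h => (Stmt13Aux.embP_injective (hv₀.trans h)).symm,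
                    fun h => by rw [h, hv₀]⟩ rfl rfl
              _ = _ := by
                  rw [Finset.sum_ite_eq' Finset.univ v₀ _, if_pos (Finset.mem_univ v₀)]
          · have h0 : (kostkaZ shape (extendSeq (hatSeq μ ν u)) : ℚ) = 0 := by
              rw [hvanish u hlast]; norm_num
            rw [h0]
            exact Finset.sum_eq_zero fun v _ => if_neg (fun h => hlast (by
              rw [h]; exact Stmt13Aux.embP_last v))
      _ = GammaTheta shape μ ν w := by
          rw [GammaTheta]
          have hcz : ((conjClass w).card : ℚ) * (z : ℚ) = ((n + 1).factorial : ℚ) := by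
            exact_mod_cast card_conj_mul w
          have hc0 := conjClass_ne w
          rw [← hcz, mul_comm ((conjClass w).card : ℚ) (z : ℚ), mul_div_assoc,
            div_self hc0, mul_one]
  · -- Part 2: vanishing
    intro hyp
    rw [GammaTheta]
    have hsum : ∑ v ∈ conjClass w, (kostkaZ shape (extendSeq (hatSeq μ ν v)) : ℚ) = 0 := by
      refine Finset.sum_eq_zero fun u hu => ?_
      rw [conjClass, Finset.mem_filter] at hu
      rw [hvanish u (hyp u hu.2)]
      norm_num
    rw [hsum, mul_zero]
end

section
/- Let μ/ν be a skew shape with associated Hessenberg function h : [n] → [n] such that μ_{h(i)} - ν_i + i - h(i) > 0 for all i ∈ [n] (i.e. the Jacobi-Trudi matrix H_{μ/ν} contains no entries equal to 1 at the lowest nonzero position of each column), and let θ = (N-k,1,...,1) be a hook partition of N = |μ/ν|. Then Γ^θ_{μ/ν} = C(n-1, k) · Γ_h, i.e. the immanant character is C(n-1,k) copies of the single Stanley-Stembridge character Γ_h. -/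
open Equiv

/-!
For a permutation `v`, the entry of `μ + δ - v(ν + δ)` in position `v j` is
`μ_{v j} - ν_j + j - v j`. By maximality of `h` it is negative as soon as `v j > h j`, and
when `v ≤ h` pointwise the hypothesis `μ_{h(i)} - ν_i + i - h(i) > 0` together with the
monotonicity of `μ` makes every entry positive. So each Kostka number in `Γ^θ_{μ/ν}(w)` is
`0` when `ĥ(v) = 0`, and otherwise a Kostka number `K_{θ,c}` for a content `c` supported on
exactly `{0, …, n-1}`.

A semistandard tableau of hook shape `(N-k, 1^k)` with such a content is determined by the set
of entries of its leg: they are `k` distinct values above the corner, hence in `{1, …, n-1}`,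
and the first row consists of the remaining entries in weakly increasing order. Conversely
every `k`-subset of `{1, …, n-1}` arises, the corner being `0`. Hence `K_{θ,c} = C(n-1, k)`.
-/

open Finset

theorem map_getD_range_length {α : Type*} (l : List α) (d : α) :
    (Multiset.range l.length).map (fun j => l.getD j d) = l := by
  rw [← Multiset.coe_range, Multiset.map_coe, Multiset.coe_eq_coe]
  exact List.Perm.of_eq (List.ext_getElem (by simp) fun i _ hi => by simp [hi])

theorem count_map_range {α : Type*} [DecidableEq α] (f : ℕ → α) (L : ℕ) (a : α) :
    ((Multiset.range L).map f).count a = {j | j < L ∧ f j = a}.ncard := by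
  have : {j | j < L ∧ f j = a} = ↑((Finset.range L).filter (fun j => f j = a)) := by
    ext; simp
  rw [this, Set.ncard_coe_finset, Multiset.count_map, Finset.card_def, Finset.filter_val,
    Finset.range_val]
  simp only [eq_comm]

theorem sortedLE_map_range {α : Type*} [Preorder α] {f : ℕ → α} {L : ℕ}
    (hf : MonotoneOn f (Set.Iio L)) : ((List.range L).map f).SortedLE := by
  rw [List.sortedLE_iff_pairwise, List.pairwise_map]
  exact List.pairwise_lt_range.imp_of_mem fun ha hb hab =>
    hf (by simpa using ha) (by simpa using hb) hab.le

theorem eqOn_Iio_of_map_range_eq {α : Type*} [LinearOrder α] {f g : ℕ → α} {L : ℕ}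
    (hf : MonotoneOn f (Set.Iio L)) (hg : MonotoneOn g (Set.Iio L))
    (hfg : (Multiset.range L).map f = (Multiset.range L).map g) : Set.EqOn f g (Set.Iio L) := by
  rw [← Multiset.coe_range, Multiset.map_coe, Multiset.map_coe, Multiset.coe_eq_coe] at hfg
  have := hfg.eq_of_sortedLE (sortedLE_map_range hf) (sortedLE_map_range hg)
  exact fun j hj => List.map_inj_left.1 this j (List.mem_range.2 hj)

theorem count_sum_replicate {n : ℕ} {c : ℕ → ℕ} (hc : ∀ m, n ≤ m → c m = 0) (m : ℕ) :
    (∑ i ∈ range n, Multiset.replicate (c i) i).count m = c m := by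
  rw [Multiset.count_sum']
  simp only [Multiset.count_replicate, Finset.sum_ite_eq', Finset.mem_range]
  split_ifs with hm
  · rfl
  · exact (hc m (not_lt.1 hm)).symm

def hookRow (N k : ℕ) (T : ℕ → ℕ → ℕ) : Multiset ℕ := (Multiset.range (N - k)).map (T 0)

def hookLeg (k : ℕ) (T : ℕ → ℕ → ℕ) : Multiset ℕ :=
  (Multiset.range k).map (fun i => T (i + 1) 0)

theorem ncard_hook_cells_eq_count (N k : ℕ) (T : ℕ → ℕ → ℕ) (m : ℕ) :
    {p : ℕ × ℕ | p.2 < hookShape N k p.1 ∧ T p.1 p.2 = m}.ncard =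
      (hookRow N k T + hookLeg k T).count m := by
  have hcells : {p : ℕ × ℕ | p.2 < hookShape N k p.1 ∧ T p.1 p.2 = m} =
      (fun j => (0, j)) '' {j | j < N - k ∧ T 0 j = m} ∪
        (fun i => (i + 1, 0)) '' {i | i < k ∧ T (i + 1) 0 = m} := by
    ext ⟨_ | i, _ | j⟩ <;> simp [hookShape] <;> split_ifs <;> omega
  have hfin (L : ℕ) (p : ℕ → Prop) : {j | j < L ∧ p j}.Finite :=
    (Set.finite_lt_nat L).subset fun _ hj => hj.1
  rw [hcells, Set.ncard_union_eq _ ((hfin _ _).image _) ((hfin _ _).image _),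
    Set.ncard_image_of_injective _ (Prod.mk_right_injective 0),
    Set.ncard_image_of_injective _ fun _ _ h => by simpa using h,
    Multiset.count_add, hookRow, hookLeg, count_map_range, count_map_range]
  rw [Set.disjoint_left]
  rintro _ ⟨j, -, rfl⟩ ⟨i, -, h⟩
  simp at h

namespace IsSSYT

variable {N k : ℕ} {T : ℕ → ℕ → ℕ}

theorem hook_row_monotoneOn (hT : IsSSYT (hookShape N k) T) :
    MonotoneOn (T 0) (Set.Iio (N - k)) :=
  monotoneOn_of_le_add_one Set.ordConnected_Iio fun j _ _ hj =>
    hT.1 0 j (by simpa [hookShape] using hj)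

theorem hook_col_strictMonoOn (hT : IsSSYT (hookShape N k) T) :
    StrictMonoOn (fun i => T i 0) (Set.Iic k) :=
  strictMonoOn_of_lt_add_one Set.ordConnected_Iic fun i _ _ hi =>
    hT.2.1 i 0 (by simp only [Set.mem_Iic] at hi; simp [hookShape, hi])

theorem hook_leg_strictMonoOn (hT : IsSSYT (hookShape N k) T) :
    StrictMonoOn (fun i => T (i + 1) 0) (Set.Iio k) := fun a ha b hb hab =>
  hT.hook_col_strictMonoOn (Set.mem_Iic.2 ha) (Set.mem_Iic.2 hb) (by omega)

theorem hook_corner_lt_of_mem_hookLeg (hT : IsSSYT (hookShape N k) T) {x : ℕ}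
    (hx : x ∈ hookLeg k T) : T 0 0 < x := by
  obtain ⟨i, hi, rfl⟩ := Multiset.mem_map.1 hx
  exact hT.hook_col_strictMonoOn (Nat.zero_le k) (Multiset.mem_range.1 hi) i.succ_pos

theorem hookLeg_nodup (hT : IsSSYT (hookShape N k) T) : (hookLeg k T).Nodup :=
  (Multiset.nodup_range k).map_on fun _ hx _ hy =>
    hT.hook_leg_strictMonoOn.injOn (by simpa using hx) (by simpa using hy)

theorem hook_ext {T' : ℕ → ℕ → ℕ} (hT : IsSSYT (hookShape N k) T)
    (hT' : IsSSYT (hookShape N k) T') (hrow : hookRow N k T = hookRow N k T')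
    (hleg : hookLeg k T = hookLeg k T') : T = T' := by
  funext i j
  by_cases hrowj : i = 0 ∧ j < N - k
  · obtain ⟨rfl, hj⟩ := hrowj
    exact eqOn_Iio_of_map_range_eq hT.hook_row_monotoneOn hT'.hook_row_monotoneOn hrow hj
  by_cases hlegi : 0 < i ∧ i ≤ k ∧ j = 0
  · obtain ⟨hi, hik, rfl⟩ := hlegi
    obtain ⟨i, rfl⟩ := Nat.exists_eq_add_one_of_ne_zero hi.ne'
    exact eqOn_Iio_of_map_range_eq hT.hook_leg_strictMonoOn.monotoneOn
      hT'.hook_leg_strictMonoOn.monotoneOn hleg (Set.mem_Iio.2 hik)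
  have houtside : hookShape N k i ≤ j := by simp only [hookShape]; split_ifs <;> omega
  rw [hT.2.2 i j houtside, hT'.2.2 i j houtside]

theorem hookLeg_toFinset_mem_powersetCard {n : ℕ} {M : Multiset ℕ}
    (hT : IsSSYT (hookShape N k) T) (hM : hookRow N k T + hookLeg k T = M)
    (hMn : ∀ x ∈ M, x < n) : (hookLeg k T).toFinset ∈ (Icc 1 (n - 1)).powersetCard k := by
  refine Finset.mem_powersetCard.2 ⟨fun x hx => ?_, ?_⟩
  · rw [Multiset.mem_toFinset] at hx
    have hxM : x < n := hMn x (hM ▸ Multiset.mem_add.2 (Or.inr hx))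
    have := hT.hook_corner_lt_of_mem_hookLeg hx
    exact Finset.mem_Icc.2 ⟨by omega, by omega⟩
  · rw [Multiset.toFinset_card_of_nodup hT.hookLeg_nodup, hookLeg, Multiset.card_map,
      Multiset.card_range]

theorem eq_of_hookLeg_toFinset_eq {T' : ℕ → ℕ → ℕ} (hT : IsSSYT (hookShape N k) T)
    (hT' : IsSSYT (hookShape N k) T')
    (hentries : hookRow N k T + hookLeg k T = hookRow N k T' + hookLeg k T')
    (hlegs : (hookLeg k T).toFinset = (hookLeg k T').toFinset) : T = T' := by
  have hleg : hookLeg k T = hookLeg k T' := by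
    simpa [hT.hookLeg_nodup.dedup, hT'.hookLeg_nodup.dedup] using congrArg Finset.val hlegs
  rw [hleg] at hentries
  exact hT.hook_ext hT' (add_right_cancel hentries) hleg

end IsSSYT

def hookOfLists (r l : List ℕ) : ℕ → ℕ → ℕ := fun i j =>
  if i = 0 then r.getD j 0 else if j = 0 then l.getD (i - 1) 0 else 0

section HookOfLists

variable {N k : ℕ} {r l : List ℕ}

theorem hookRow_hookOfLists (hr : r.length = N - k) : hookRow N k (hookOfLists r l) = r := by
  rw [hookRow, ← map_getD_range_length r 0, hr]
  exact Multiset.map_congr rfl fun j _ => by simp [hookOfLists]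

theorem hookLeg_hookOfLists (hl : l.length = k) : hookLeg k (hookOfLists r l) = l := by
  rw [hookLeg, ← map_getD_range_length l 0, hl]
  exact Multiset.map_congr rfl fun i _ => by simp [hookOfLists]

theorem isSSYT_hookOfLists (hr : r.SortedLE) (hl : l.SortedLT) (hrN : r.length = N - k)
    (hlk : l.length = k) (hcorner : ∀ x ∈ l, r.head! < x) :
    IsSSYT (hookShape N k) (hookOfLists r l) := by
  refine ⟨fun i j hj => ?_, fun i j hj => ?_, fun i j hj => ?_⟩
  · rcases i with _ | i
    · simp only [hookShape, if_true] at hj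
      simp only [hookOfLists, if_true, List.getD_eq_getElem _ _ (show j < r.length by omega),
        List.getD_eq_getElem _ _ (show j + 1 < r.length by omega)]
      exact List.sortedLE_iff_getElem_le_getElem_of_le.1 hr (Nat.le_succ j)
    · simp only [hookShape, Nat.add_one_ne_zero, if_false] at hj
      split_ifs at hj <;> omega
  · have hik : i < k ∧ j = 0 := by
      simp only [hookShape, Nat.add_one_ne_zero, if_false] at hj
      split_ifs at hj <;> omega
    obtain ⟨hik, rfl⟩ := hik
    have hget : ∀ t (ht : t < l.length), l.getD t 0 = l[t] := fun t ht =>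
      List.getD_eq_getElem _ _ ht
    rcases i with _ | i
    · simpa only [hookOfLists, if_true, Nat.add_one_ne_zero, if_false, Nat.add_sub_cancel,
        hget 0 (by omega)] using (show r.getD 0 0 = r.head! by cases r <;> rfl) ▸
          hcorner _ (List.getElem_mem _)
    · simpa only [hookOfLists, if_true, Nat.add_one_ne_zero, if_false, Nat.add_sub_cancel,
        hget i (by omega), hget (i + 1) (by omega)] using
        List.sortedLT_iff_getElem_lt_getElem_of_lt.1 hl (Nat.lt_succ_self i)
  · simp only [hookShape] at hj
    simp only [hookOfLists]
    split_ifs at hj ⊢ <;> first | rfl | (apply List.getD_eq_default; omega)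

end HookOfLists

theorem exists_isSSYT_hook {N k : ℕ} {M : Multiset ℕ} {S : Finset ℕ} (hSM : S.val ≤ M)
    (hM : Multiset.card M = N) (hS : S.card = k) (hmin : ∀ x ∈ S, ∃ y ∈ M - S.val, y < x) :
    ∃ T, IsSSYT (hookShape N k) T ∧ hookRow N k T + hookLeg k T = M ∧
      (hookLeg k T).toFinset = S := by
  set r := (M - S.val).sort
  set l := S.sort
  have hr : r.length = N - k := by
    rw [Multiset.length_sort, Multiset.card_sub hSM, hM, Finset.card_val, hS]
  have hl : l.length = k := by rw [Finset.length_sort, hS]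
  have hcorner : ∀ x ∈ l, r.head! < x := fun x hx => by
    obtain ⟨y, hy, hyx⟩ := hmin x ((Finset.mem_sort _).1 hx)
    have hry : r.head! ≤ y :=
      (Multiset.pairwise_sort (M - S.val) _).head!_le ((Multiset.mem_sort _).2 hy)
    exact hry.trans_lt hyx
  refine ⟨hookOfLists r l, isSSYT_hookOfLists (Multiset.pairwise_sort _ _).sortedLE
    (Finset.sortedLT_sort S) hr hl hcorner, ?_, ?_⟩
  · rw [hookRow_hookOfLists hr, hookLeg_hookOfLists hl, Multiset.sort_eq, Finset.sort_eq,
      tsub_add_cancel_of_le hSM]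
  · rw [hookLeg_hookOfLists hl, List.toFinset_coe, Finset.sort_toFinset]

theorem kostka_hookShape {n N k : ℕ} {c : ℕ → ℕ} (hc : ∀ m, 0 < c m ↔ m < n)
    (hN : ∑ m ∈ range n, c m = N) : kostka (hookShape N k) c = (n - 1).choose k := by
  set M := ∑ m ∈ range n, Multiset.replicate (c m) m
  have hcount : ∀ m, M.count m = c m :=
    count_sum_replicate fun m hm => Nat.eq_zero_of_not_pos fun h => by have := (hc m).1 h; omega
  have hcontent : ∀ T,
      (∀ m, {p : ℕ × ℕ | p.2 < hookShape N k p.1 ∧ T p.1 p.2 = m}.ncard = c m) ↔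
        hookRow N k T + hookLeg k T = M := fun T => by
    simp only [ncard_hook_cells_eq_count, Multiset.ext, hcount]
  have hmem : ∀ x, x ∈ M ↔ x < n := fun x => by rw [← Multiset.count_pos, hcount, hc]
  have hcard : Multiset.card M = N := by simp [M, Multiset.card_sum, hN]
  have hchoose : (n - 1).choose k = ((Icc 1 (n - 1)).powersetCard k : Set (Finset ℕ)).ncard := by
    rw [Set.ncard_coe_finset, card_powersetCard, Nat.card_Icc, Nat.add_sub_cancel]
  rw [kostka, hchoose]
  refine Set.BijOn.ncard_eq (f := fun T => (hookLeg k T).toFinset) ⟨?_, ?_, ?_⟩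
  · rintro T ⟨hT, hTc⟩
    exact hT.hookLeg_toFinset_mem_powersetCard ((hcontent T).1 hTc) fun x => (hmem x).1
  · rintro T ⟨hT, hTc⟩ T' ⟨hT', hT'c⟩ hTT'
    exact hT.eq_of_hookLeg_toFinset_eq hT'
      (((hcontent T).1 hTc).trans ((hcontent T').1 hT'c).symm) hTT'
  · intro S hS
    obtain ⟨hSsub, hScard⟩ := Finset.mem_powersetCard.1 hS
    have hSn : ∀ x ∈ S, 1 ≤ x ∧ x < n := fun x hx => by
      have := Finset.mem_Icc.1 (hSsub hx); omega
    have hSM : S.val ≤ M :=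
      (Multiset.le_iff_subset S.nodup).2 fun x hx => (hmem x).2 (hSn x hx).2
    have hmin : ∀ x ∈ S, ∃ y ∈ M - S.val, y < x := fun x hx => by
      refine ⟨0, ?_, (hSn x hx).1⟩
      have h0S : (S.val).count 0 = 0 := Multiset.count_eq_zero.2 fun h0 => by
        have := hSn 0 h0; omega
      rw [← Multiset.count_pos, Multiset.count_sub, h0S, hcount, Nat.sub_zero, hc]
      have := hSn x hx; omega
    obtain ⟨T, hT, hTM, hTS⟩ := exists_isSSYT_hook hSM hcard hScard hmin
    exact ⟨T, ⟨hT, (hcontent T).2 hTM⟩, hTS⟩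

theorem kostkaZ_eq_zero_of_neg (shape : ℕ → ℕ) {c : ℕ → ℤ} {m : ℕ} (hm : c m < 0) :
    kostkaZ shape c = 0 := by
  rw [kostkaZ, if_neg fun h => (h m).not_gt hm]

theorem kostkaZ_hookShape_extendSeq {n N k : ℕ} {a : Fin n → ℤ} (ha : ∀ i, 0 < a i)
    (hN : ∑ i, a i = N) : kostkaZ (hookShape N k) (extendSeq a) = (n - 1).choose k := by
  have hext : ∀ m, extendSeq a m = if h : m < n then a ⟨m, h⟩ else 0 := fun _ => rfl
  rw [kostkaZ, if_pos fun m => by rw [hext]; split_ifs <;> simp [(ha _).le]]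
  refine kostka_hookShape (fun m => ?_) ?_
  · rw [hext]; split_ifs with hm <;> simp [hm, ha]
  · zify
    rw [← hN, ← Fin.sum_univ_eq_sum_range]
    refine Finset.sum_congr rfl fun i _ => ?_
    simp [hext, (ha i).le]

section Immanant

variable {n : ℕ} (μ ν : Fin n → ℕ)

theorem hatSeq_apply_self (v : Perm (Fin n)) (j : Fin n) :
    hatSeq μ ν v (v j) = ((μ (v j) + (j : ℕ) : ℕ) : ℤ) - ((ν j + (v j : ℕ) : ℕ) : ℤ) := by
  simp only [hatSeq, deltaSeq, Perm.coe_inv, symm_apply_apply]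
  push_cast
  ring

theorem sum_hatSeq (v : Perm (Fin n)) : ∑ i, hatSeq μ ν v i = ∑ i, ((μ i : ℤ) - ν i) := by
  simp only [hatSeq, Finset.sum_sub_distrib]
  rw [Equiv.sum_comp v⁻¹ fun i => (ν i : ℤ) + deltaSeq n i, Finset.sum_add_distrib,
    Finset.sum_add_distrib]
  ring

variable {μ ν} {h : Fin n → Fin n} {v : Perm (Fin n)}

theorem hatSeq_pos_of_forall_le (hμ : Antitone μ)
    (hpos : ∀ i : Fin n, ν i + ((h i : ℕ)) < μ (h i) + (i : ℕ)) (hv : ∀ i, v i ≤ h i)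
    (i : Fin n) : 0 < hatSeq μ ν v i := by
  obtain ⟨j, rfl⟩ := v.surjective i
  have hμj : μ (h j) ≤ μ (v j) := hμ (hv j)
  have hvj : (v j : ℕ) ≤ h j := hv j
  rw [hatSeq_apply_self, sub_pos, Nat.cast_lt]
  linarith [hpos j]

theorem hatSeq_neg_of_lt (hh : IsHessOf μ ν h) {j : Fin n} (hj : h j < v j) :
    hatSeq μ ν v (v j) < 0 := by
  rw [hatSeq_apply_self, sub_neg, Nat.cast_lt]
  exact lt_of_not_ge fun hle => (hh j).2 (v j) hle |>.not_gt hj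

theorem kostkaZ_hookShape_hatSeq {N k : ℕ} (hμ : Antitone μ) (hlt : ∀ i, ν i < μ i)
    (hN : N = ∑ i : Fin n, (μ i - ν i)) (hh : IsHessOf μ ν h)
    (hpos : ∀ i : Fin n, ν i + ((h i : ℕ)) < μ (h i) + (i : ℕ)) (v : Perm (Fin n)) :
    kostkaZ (hookShape N k) (extendSeq (hatSeq μ ν v)) = (n - 1).choose k * hhat h v := by
  by_cases hv : ∀ i, v i ≤ h i
  · rw [hhat, if_pos hv, mul_one]
    refine kostkaZ_hookShape_extendSeq (hatSeq_pos_of_forall_le hμ hpos hv) ?_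
    rw [sum_hatSeq, hN, Nat.cast_sum]
    exact Finset.sum_congr rfl fun i _ => (Nat.cast_sub (hlt i).le).symm
  · push Not at hv
    obtain ⟨j, hj⟩ := hv
    rw [hhat, if_neg fun hall => (hall j).not_gt hj, mul_zero]
    refine kostkaZ_eq_zero_of_neg _ (m := v j) ?_
    simpa [extendSeq] using hatSeq_neg_of_lt hh hj

end Immanant

theorem stmt16_general {n N k : ℕ} (μ ν : Fin n → ℕ) (hμ : Antitone μ)
    (hlt : ∀ i, ν i < μ i) (hN : N = ∑ i : Fin n, (μ i - ν i))
    (h : Fin n → Fin n) (hh : IsHessOf μ ν h)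
    (hpos : ∀ i : Fin n, ν i + ((h i : ℕ)) < μ (h i) + (i : ℕ))
    (w : Perm (Fin n)) :
    GammaTheta (hookShape N k) μ ν w = ((n - 1).choose k : ℚ) * GammaH h w := by
  have hterm : ∀ v, (kostkaZ (hookShape N k) (extendSeq (hatSeq μ ν v)) : ℚ) =
      (n - 1).choose k * hhat h v := fun v => by
    exact_mod_cast kostkaZ_hookShape_hatSeq hμ hlt hN hh hpos v
  simp only [GammaTheta, GammaH, hterm, ← Finset.mul_sum]
  ring

/-- if the Jacobi–Trudi matrix of `μ/ν` has no `1` at the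
lowest nonzero position of each column (`μ_{h(i)} - ν_i + i - h(i) > 0` for all
`i`), then for the hook `θ = (N-k,1,...,1)` we have
`Γ^θ_{μ/ν} = C(n-1, k) · Γ_h`. -/
theorem stmt16 {n N k : ℕ} (μ ν : Fin n → ℕ) (hμ : Antitone μ) (hν : Antitone ν)
    (hlt : ∀ i, ν i < μ i) (hN : N = ∑ i : Fin n, (μ i - ν i)) (hk : k < N)
    (h : Fin n → Fin n) (hh : IsHessOf μ ν h)
    (hpos : ∀ i : Fin n, ν i + ((h i : ℕ)) < μ (h i) + (i : ℕ))
    (w : Perm (Fin n)) :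
    GammaTheta (hookShape N k) μ ν w = ((n - 1).choose k : ℚ) * GammaH h w :=
  stmt16_general μ ν hμ hlt hN h hh hpos w
end

section
/- Let μ⁰/ν⁰ and μ¹/ν¹ be skew shapes (padded to length n) whose skew diagrams have the same connected components, related by a permutation σ ∈ S_n of the rows that is order-preserving within the row indices of each connected component. Then for every w' in the Young subgroup S⁰ associated to μ⁰/ν⁰ (generated by transpositions (i,i+1) with ν⁰_i < μ⁰_{i+1}), the entries satisfy (μ⁰ + δ - w'(ν⁰ + δ))_k = (μ¹ + δ - (σ w' σ^{-1})(ν¹ + δ))_{σ(k)} for all k ∈ [n], so K_{θ, μ⁰+δ-w'(ν⁰+δ)} = K_{θ, μ¹+δ-(σw'σ^{-1})(ν¹+δ)} for all partitions θ. -/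
open Equiv

/-- Rows `s` and `t` lie in the same connected component of the skew diagram of
`μ/ν`: every pair of consecutive rows between them overlaps. -/
def SameComp {n : ℕ} (μ ν : Fin n → ℕ) (s t : Fin n) : Prop :=
  ∀ r k : Fin n, min s t ≤ r → r < max s t → (k : ℕ) = (r : ℕ) + 1 → ν r < μ k

/-!
Within a connected component `σ` moves rows rigidly, and `σ w' σ⁻¹` sends `σ k` where `w'`
sends `k`; so in `μ + δ - w(ν + δ)` both the staircase and the row lengths contribute the same
differences, and the second content is the first one reindexed by `σ`. Kostka numbers are
symmetric in the content: adjacent transpositions generate `Sₙ`, and for `(a a+1)` the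
Bender–Knuth involution matches tableaux of content `c` with those of content `c ∘ (a a+1)`.
In each row the entries `a`, `a+1` that are not part of a vertical domino `a` over `a+1` form a
word `a^r (a+1)^s`; the involution replaces it by `a^s (a+1)^r`. Tableaux are handled through
the number of entries `< v` in each row: a filling is semistandard as soon as its entries `< v`
fill an initial segment of every row, of length at most that of the entries `< v + 1` in the
row below.
-/

open Finset

def rowCountLT (shape : ℕ → ℕ) (T : ℕ → ℕ → ℕ) (v i : ℕ) : ℕ :=
  #{j ∈ range (shape i) | T i j < v}

section RowCount

variable {shape : ℕ → ℕ} {T : ℕ → ℕ → ℕ}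

theorem rowCountLT_mono (i : ℕ) : Monotone (rowCountLT shape T · i) := fun _ _ h =>
  card_le_card (monotone_filter_right _ fun _ _ hj => hj.trans_le h)

theorem rowCountLT_le_shape (v i : ℕ) : rowCountLT shape T v i ≤ shape i :=
  (card_filter_le _ _).trans (card_range _).le

theorem rowCountLT_eq_of_forall {v i m : ℕ} (hm : m ≤ shape i)
    (h : ∀ j < shape i, (T i j < v ↔ j < m)) : rowCountLT shape T v i = m := by
  have : {j ∈ range (shape i) | T i j < v} = range m := by
    ext j
    simp only [mem_filter, mem_range]
    exact ⟨fun hj => (h j hj.1).1 hj.2, fun hj => ⟨by omega, (h j (by omega)).2 hj⟩⟩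
  rw [rowCountLT, this, card_range]

theorem isSSYT_of_forall_lt_iff (hsh : Antitone shape) (C : ℕ → ℕ → ℕ)
    (hC : ∀ v i j, j < shape i → (T i j < v ↔ j < C v i))
    (hcol : ∀ v i, C (v + 1) (i + 1) ≤ C v i) (hzero : ∀ i j, shape i ≤ j → T i j = 0) :
    IsSSYT shape T := by
  refine ⟨fun i j hj => ?_, fun i j hj => ?_, hzero⟩
  · by_contra! h
    have := (hC _ i (j + 1) hj).1 h
    exact lt_irrefl _ ((hC _ i j (by omega)).2 (by omega))
  · by_contra! h
    have hj' : j < shape i := hj.trans_le (hsh i.le_succ)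
    have := (hC (T i j + 1) (i + 1) j hj).1 (Nat.lt_succ_of_le h)
    exact lt_irrefl _ ((hC (T i j) i j hj').2 (this.trans_le (hcol _ _)))

namespace IsSSYT

theorem row_monotone (hT : IsSSYT shape T) {i j k : ℕ} (hjk : j ≤ k) (hk : k < shape i) :
    T i j ≤ T i k := by
  induction k, hjk using Nat.le_induction with
  | base => exact le_rfl
  | succ k _ ih => exact (ih (by omega)).trans (hT.1 i k hk)

theorem lt_iff_lt_rowCountLT (hT : IsSSYT shape T) {i j : ℕ} (v : ℕ) (hj : j < shape i) :
    T i j < v ↔ j < rowCountLT shape T v i := by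
  constructor
  · intro h
    calc j < #(range (j + 1)) := by simp
      _ ≤ rowCountLT shape T v i := card_le_card fun k hk => by
          simp only [mem_range, mem_filter] at hk ⊢
          exact ⟨by omega, (hT.row_monotone (by omega) hj).trans_lt h⟩
  · intro h
    by_contra! hv
    have : rowCountLT shape T v i ≤ j :=
      calc rowCountLT shape T v i ≤ #(range j) := card_le_card fun k hk => by
            simp only [mem_range, mem_filter] at hk ⊢
            by_contra! hjk
            exact (hT.row_monotone hjk hk.1).not_gt (hk.2.trans_le hv)
        _ = j := card_range j
    omega

theorem rowCountLT_succ_succ_le (hT : IsSSYT shape T) (hsh : Antitone shape) (v i : ℕ) :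
    rowCountLT shape T (v + 1) (i + 1) ≤ rowCountLT shape T v i := by
  by_contra! h
  set j := rowCountLT shape T v i
  have hj1 : j < shape (i + 1) := h.trans_le (rowCountLT_le_shape _ _)
  have hj : j < shape i := hj1.trans_le (hsh i.le_succ)
  have hbelow : T (i + 1) j < v + 1 := (hT.lt_iff_lt_rowCountLT _ hj1).2 h
  have : T i j < v := by have := hT.2.1 i j hj1; omega
  exact lt_irrefl j ((hT.lt_iff_lt_rowCountLT v hj).1 this)

theorem setOf_entry_eq (hT : IsSSYT shape T) (v : ℕ) :
    {p : ℕ × ℕ | p.2 < shape p.1 ∧ T p.1 p.2 = v} =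
      {p | rowCountLT shape T v p.1 ≤ p.2 ∧ p.2 < rowCountLT shape T (v + 1) p.1} := by
  ext ⟨i, j⟩
  simp only [Set.mem_ofPred_eq]
  constructor
  · rintro ⟨hj, rfl⟩
    rw [← not_lt, ← hT.lt_iff_lt_rowCountLT _ hj, ← hT.lt_iff_lt_rowCountLT _ hj]
    omega
  · rintro ⟨h1, h2⟩
    have hj : j < shape i := h2.trans_le (rowCountLT_le_shape _ _)
    rw [← not_lt, ← hT.lt_iff_lt_rowCountLT _ hj] at h1
    rw [← hT.lt_iff_lt_rowCountLT _ hj] at h2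
    exact ⟨hj, by omega⟩

end IsSSYT

end RowCount

section FreeBlock

variable (C : ℕ → ℕ → ℕ) (a : ℕ)

/- `C v i` plays the role of the number of entries `< v` in row `i` of a tableau. The free
entries `a`, `a+1` of row `i` occupy the positions `[freeStart C a i, freeEnd C a i)`, and
`bkRowCount C a i` is the number of entries `≤ a` in row `i` after the Bender–Knuth move. -/

def freeStart (i : ℕ) : ℕ := max (C a i) (C (a + 2) (i + 1))

def freeEnd : ℕ → ℕ
  | 0 => C (a + 2) 0
  | i + 1 => min (C (a + 2) (i + 1)) (C a i)

def bkRowCount (i : ℕ) : ℕ := freeStart C a i + freeEnd C a i - C (a + 1) i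

variable {C}

theorem freeEnd_le (i : ℕ) : freeEnd C a i ≤ C (a + 2) i := by
  cases i with
  | zero => exact le_rfl
  | succ i => exact min_le_left _ _

theorem freeStart_le (hmono : ∀ i, Monotone (C · i)) (hcol : ∀ v i, C (v + 1) (i + 1) ≤ C v i)
    (i : ℕ) : freeStart C a i ≤ C (a + 1) i :=
  max_le (hmono i (by omega)) (hcol (a + 1) i)

theorem le_freeEnd (hmono : ∀ i, Monotone (C · i)) (hcol : ∀ v i, C (v + 1) (i + 1) ≤ C v i)
    (i : ℕ) : C (a + 1) i ≤ freeEnd C a i := by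
  cases i with
  | zero => exact hmono 0 (by omega)
  | succ i => exact le_min (hmono _ (by omega)) (hcol a i)

theorem freeStart_le_bkRowCount (hmono : ∀ i, Monotone (C · i))
    (hcol : ∀ v i, C (v + 1) (i + 1) ≤ C v i) (i : ℕ) : freeStart C a i ≤ bkRowCount C a i := by
  have := le_freeEnd a hmono hcol i
  unfold bkRowCount
  omega

theorem bkRowCount_le_freeEnd (hmono : ∀ i, Monotone (C · i))
    (hcol : ∀ v i, C (v + 1) (i + 1) ≤ C v i) (i : ℕ) : bkRowCount C a i ≤ freeEnd C a i := by
  have := freeStart_le a hmono hcol i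
  unfold bkRowCount
  omega

theorem bkRowCount_update (hmono : ∀ i, Monotone (C · i))
    (hcol : ∀ v i, C (v + 1) (i + 1) ≤ C v i) :
    bkRowCount (Function.update C (a + 1) (bkRowCount C a)) a = C (a + 1) := by
  funext i
  have hS := freeStart_le a hmono hcol i
  have hE := le_freeEnd a hmono hcol i
  cases i <;> simp only [bkRowCount, freeStart, freeEnd, Function.update_self,
    Function.update_of_ne (show a ≠ a + 1 by omega),
    Function.update_of_ne (show a + 2 ≠ a + 1 by omega)] at hS hE ⊢ <;> omega

theorem ncard_bkRowCount (hmono : ∀ i, Monotone (C · i))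
    (hcol : ∀ v i, C (v + 1) (i + 1) ≤ C v i) :
    {p : ℕ × ℕ | C a p.1 ≤ p.2 ∧ p.2 < bkRowCount C a p.1}.ncard =
      {p : ℕ × ℕ | C (a + 1) p.1 ≤ p.2 ∧ p.2 < C (a + 2) p.1}.ncard := by
  have hS := freeStart_le a hmono hcol
  have hE := le_freeEnd a hmono hcol
  have hXS (i : ℕ) : C a i ≤ freeStart C a i := le_max_left _ _
  have hZS (i : ℕ) : C (a + 2) (i + 1) ≤ freeStart C a i := le_max_right _ _
  have hEX (i : ℕ) : freeEnd C a (i + 1) ≤ C a i := min_le_right _ _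
  -- The `a`s of row `i` lying in a vertical domino sit right above the `a+1`s of row `i+1`
  -- lying in one; the free `a`s are shifted onto the positions of the free `a+1`s.
  let Φ : ℕ × ℕ → ℕ × ℕ := fun p =>
    if p.2 < freeStart C a p.1 then (p.1 + 1, p.2)
    else (p.1, p.2 + C (a + 1) p.1 - freeStart C a p.1)
  refine Set.ncard_congr (fun p _ => Φ p) ?_ ?_ ?_
  · rintro ⟨i, j⟩ ⟨h1, h2⟩
    dsimp only [bkRowCount] at h1 h2
    have := hS i; have := hE i
    by_cases hj : j < freeStart C a i
    · simp only [Φ, if_pos hj]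
      exact ⟨(hcol a i).trans h1, by dsimp only; simp only [freeStart] at hj; omega⟩
    · simp only [Φ, if_neg hj]
      exact ⟨by dsimp only; omega, by dsimp only; have := freeEnd_le a (C := C) i; omega⟩
  · rintro ⟨i, j⟩ ⟨i', j'⟩ ⟨h1, h2⟩ ⟨h1', h2'⟩ heq
    dsimp only [bkRowCount] at h1 h2 h1' h2'
    have := hS i'; have := hE i'
    simp only [Φ] at heq
    split_ifs at heq with hj hj' hj' <;> simp only [Prod.mk.injEq, add_left_inj] at heq
    · obtain ⟨rfl, rfl⟩ := heq; rfl
    · obtain ⟨rfl, rfl⟩ := heq; have := hEX i; omega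
    · obtain ⟨rfl, rfl⟩ := heq; have := hEX i'; omega
    · obtain ⟨rfl, h⟩ := heq; exact Prod.ext rfl (by dsimp only; omega)
  · rintro ⟨i, j⟩ ⟨h1, h2⟩
    dsimp only at h1 h2
    by_cases hj : j < freeEnd C a i
    · have := hS i; have := hE i; have := hXS i
      refine ⟨(i, j + freeStart C a i - C (a + 1) i),
        ⟨by dsimp only; omega, by dsimp only [bkRowCount]; omega⟩, ?_⟩
      simp only [Φ, if_neg (show ¬ j + freeStart C a i - C (a + 1) i < freeStart C a i by omega)]
      exact Prod.ext rfl (by dsimp only; omega)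
    · obtain ⟨i, rfl⟩ : ∃ i', i = i' + 1 := by
        cases i with
        | zero => exact absurd h2 (by simpa [freeEnd] using hj)
        | succ i => exact ⟨i, rfl⟩
      have := hS i; have := hE i; have := hZS i
      have hXj : C a i ≤ j := by simp only [freeEnd] at hj; omega
      have hjS : j < freeStart C a i := by omega
      refine ⟨(i, j), ⟨hXj, by dsimp only [bkRowCount]; omega⟩, ?_⟩
      simp only [Φ, if_pos hjS]

end FreeBlock

def benderKnuth (shape : ℕ → ℕ) (a : ℕ) (T : ℕ → ℕ → ℕ) (i j : ℕ) : ℕ :=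
  if rowCountLT shape T a i ≤ j ∧ j < rowCountLT shape T (a + 2) i then
    if j < bkRowCount (rowCountLT shape T) a i then a else a + 1
  else T i j

section BenderKnuth

variable {shape : ℕ → ℕ} {T : ℕ → ℕ → ℕ} (a : ℕ)

theorem benderKnuth_lt_iff (hT : IsSSYT shape T) (hsh : Antitone shape) {i j : ℕ} (v : ℕ)
    (hj : j < shape i) :
    benderKnuth shape a T i j < v ↔
      j < Function.update (rowCountLT shape T) (a + 1) (bkRowCount (rowCountLT shape T) a) v i := by
  have hmono := rowCountLT_mono (shape := shape) (T := T)
  have hcol := hT.rowCountLT_succ_succ_le hsh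
  have hSN := freeStart_le_bkRowCount a hmono hcol i
  have hNE := bkRowCount_le_freeEnd a hmono hcol i
  have hXS : rowCountLT shape T a i ≤ freeStart (rowCountLT shape T) a i := le_max_left _ _
  have hEZ := freeEnd_le (C := rowCountLT shape T) a i
  have hX := hT.lt_iff_lt_rowCountLT a hj
  have hZ := hT.lt_iff_lt_rowCountLT (a + 2) hj
  have hv := hT.lt_iff_lt_rowCountLT v hj
  unfold benderKnuth
  by_cases hva : v = a + 1
  · subst hva
    rw [Function.update_self]
    split_ifs <;> omega
  · rw [Function.update_of_ne hva]
    split_ifs <;> omega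

theorem rowCountLT_benderKnuth (hT : IsSSYT shape T) (hsh : Antitone shape) :
    rowCountLT shape (benderKnuth shape a T) =
      Function.update (rowCountLT shape T) (a + 1) (bkRowCount (rowCountLT shape T) a) := by
  funext v i
  refine rowCountLT_eq_of_forall ?_ fun j hj => benderKnuth_lt_iff a hT hsh v hj
  rw [Function.update_apply]
  split_ifs
  · exact (bkRowCount_le_freeEnd a rowCountLT_mono (hT.rowCountLT_succ_succ_le hsh) i).trans
      ((freeEnd_le a i).trans (rowCountLT_le_shape _ _))
  · exact rowCountLT_le_shape _ _

theorem isSSYT_benderKnuth (hT : IsSSYT shape T) (hsh : Antitone shape) :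
    IsSSYT shape (benderKnuth shape a T) := by
  have hmono := rowCountLT_mono (shape := shape) (T := T)
  have hcol := hT.rowCountLT_succ_succ_le hsh
  refine isSSYT_of_forall_lt_iff hsh _ (fun v i j hj => benderKnuth_lt_iff a hT hsh v hj)
    (fun v i => ?_) (fun i j hj => ?_)
  · by_cases hv : v = a
    · subst hv
      rw [Function.update_self, Function.update_of_ne (by omega)]
      exact (bkRowCount_le_freeEnd v hmono hcol _).trans (min_le_right _ _)
    by_cases hv' : v = a + 1
    · subst hv'
      rw [Function.update_self, Function.update_of_ne (by omega)]
      exact (le_max_right _ _).trans (freeStart_le_bkRowCount a hmono hcol i)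
    · rw [Function.update_of_ne (by omega), Function.update_of_ne hv']
      exact hcol v i
  · have := rowCountLT_le_shape (shape := shape) (T := T) (a + 2) i
    unfold benderKnuth
    rw [if_neg (by omega)]
    exact hT.2.2 i j hj

theorem benderKnuth_benderKnuth (hT : IsSSYT shape T) (hsh : Antitone shape) :
    benderKnuth shape a (benderKnuth shape a T) = T := by
  funext i j
  have hY := bkRowCount_update a rowCountLT_mono (hT.rowCountLT_succ_succ_le hsh)
  rw [benderKnuth, rowCountLT_benderKnuth a hT hsh, hY, Function.update_of_ne (by omega),
    Function.update_of_ne (by omega)]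
  split_ifs with hw
  · have hj : j < shape i := hw.2.trans_le (rowCountLT_le_shape _ _)
    have := hT.lt_iff_lt_rowCountLT a hj
    have := hT.lt_iff_lt_rowCountLT (a + 1) hj
    omega
  · have hj : j < shape i := hw.2.trans_le (rowCountLT_le_shape _ _)
    have := hT.lt_iff_lt_rowCountLT (a + 1) hj
    have := hT.lt_iff_lt_rowCountLT (a + 2) hj
    omega
  · unfold benderKnuth
    rw [if_neg hw]

theorem ncard_benderKnuth_left (hT : IsSSYT shape T) (hsh : Antitone shape) :
    {p : ℕ × ℕ | p.2 < shape p.1 ∧ benderKnuth shape a T p.1 p.2 = a}.ncard =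
      {p : ℕ × ℕ | p.2 < shape p.1 ∧ T p.1 p.2 = a + 1}.ncard := by
  rw [(isSSYT_benderKnuth a hT hsh).setOf_entry_eq, hT.setOf_entry_eq,
    rowCountLT_benderKnuth a hT hsh, Function.update_self, Function.update_of_ne (by omega)]
  exact ncard_bkRowCount a rowCountLT_mono (hT.rowCountLT_succ_succ_le hsh)

theorem ncard_benderKnuth (hT : IsSSYT shape T) (hsh : Antitone shape) (m : ℕ) :
    {p : ℕ × ℕ | p.2 < shape p.1 ∧ benderKnuth shape a T p.1 p.2 = m}.ncard =
      {p : ℕ × ℕ | p.2 < shape p.1 ∧ T p.1 p.2 = swap a (a + 1) m}.ncard := by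
  rcases eq_or_ne m a with rfl | hma
  · rw [swap_apply_left]
    exact ncard_benderKnuth_left m hT hsh
  rcases eq_or_ne m (a + 1) with rfl | hma1
  · rw [swap_apply_right]
    have := ncard_benderKnuth_left a (isSSYT_benderKnuth a hT hsh) hsh
    rwa [benderKnuth_benderKnuth a hT hsh, eq_comm] at this
  · rw [swap_apply_of_ne_of_ne hma hma1]
    congr 1
    ext ⟨i, j⟩
    refine and_congr_right fun hj => ?_
    have := hT.lt_iff_lt_rowCountLT a hj
    have := hT.lt_iff_lt_rowCountLT (a + 2) hj
    unfold benderKnuth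
    split_ifs <;> omega

end BenderKnuth

theorem kostka_comp_swap {shape : ℕ → ℕ} (hsh : Antitone shape) (a : ℕ) (c : ℕ → ℕ) :
    kostka shape (c ∘ swap a (a + 1)) = kostka shape c := by
  refine Set.ncard_congr (fun T _ => benderKnuth shape a T) ?_ ?_ ?_
  · rintro T ⟨hT, hc⟩
    refine ⟨isSSYT_benderKnuth a hT hsh, fun m => ?_⟩
    rw [ncard_benderKnuth a hT hsh, hc, Function.comp_apply, swap_apply_self]
  · rintro T T' ⟨hT, -⟩ ⟨hT', -⟩ h
    rw [← benderKnuth_benderKnuth a hT hsh, h, benderKnuth_benderKnuth a hT' hsh]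
  · rintro T ⟨hT, hc⟩
    refine ⟨benderKnuth shape a T, ⟨isSSYT_benderKnuth a hT hsh, fun m => ?_⟩,
      benderKnuth_benderKnuth a hT hsh⟩
    rw [ncard_benderKnuth a hT hsh, hc, Function.comp_apply]

namespace Equiv.Perm

theorem extendDomain_equivSubtype_of_lt {N : ℕ} (π : Perm (Fin N)) {m : ℕ} (hm : m < N) :
    π.extendDomain Fin.equivSubtype m = π ⟨m, hm⟩ :=
  extendDomain_apply_subtype π Fin.equivSubtype (p := (· < N)) hm

theorem extendDomain_equivSubtype_of_not_lt {N : ℕ} (π : Perm (Fin N)) {m : ℕ} (hm : ¬m < N) :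
    π.extendDomain Fin.equivSubtype m = m :=
  extendDomain_apply_not_subtype π Fin.equivSubtype (p := (· < N)) hm

theorem extendDomain_swap_castSucc_succ {N : ℕ} (i : Fin N) :
    (swap i.castSucc i.succ).extendDomain Fin.equivSubtype = swap (i : ℕ) (i + 1) := by
  ext m
  by_cases hm : m < N + 1
  · rw [extendDomain_equivSubtype_of_lt _ hm]
    simp only [swap_apply_def, Fin.ext_iff, Fin.val_castSucc, Fin.val_succ]
    split_ifs <;> simp_all
  · rw [extendDomain_equivSubtype_of_not_lt _ hm, swap_apply_of_ne_of_ne (by omega) (by omega)]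

end Equiv.Perm
theorem kostka_comp_extendDomain {shape : ℕ → ℕ} (hsh : Antitone shape) {N : ℕ}
    (π : Perm (Fin N)) (c : ℕ → ℕ) :
    kostka shape (c ∘ π.extendDomain Fin.equivSubtype) = kostka shape c := by
  cases N with
  | zero => rw [Subsingleton.elim π 1, Perm.extendDomain_one]; rfl
  | succ N =>
    have hπ : π ∈ Submonoid.closure (Set.range fun i : Fin N ↦ swap i.castSucc i.succ) := by
      rw [Perm.mclosure_swap_castSucc_succ]; trivial
    induction hπ using Submonoid.closure_induction generalizing c with
    | mem _ h =>
      obtain ⟨i, rfl⟩ := h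
      rw [Perm.extendDomain_swap_castSucc_succ]
      exact kostka_comp_swap hsh i c
    | one => rw [Perm.extendDomain_one]; rfl
    | mul x y _ _ hx hy =>
      rw [← Perm.extendDomain_mul, Perm.coe_mul, ← Function.comp_assoc, hy, hx]

theorem kostkaZ_extendSeq_comp {shape : ℕ → ℕ} (hsh : Antitone shape) {n : ℕ}
    (x : Fin n → ℤ) (π : Perm (Fin n)) :
    kostkaZ shape (extendSeq (x ∘ π)) = kostkaZ shape (extendSeq x) := by
  set e := π.extendDomain Fin.equivSubtype
  have he : extendSeq (x ∘ π) = extendSeq x ∘ e := by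
    funext m
    by_cases hm : m < n
    · simp [extendSeq, hm, e, Perm.extendDomain_equivSubtype_of_lt _ hm]
    · simp [extendSeq, hm, e, Perm.extendDomain_equivSubtype_of_not_lt _ hm]
  rw [he, kostkaZ, kostkaZ, Function.comp_def, e.forall_congr_right (q := fun m => 0 ≤ extendSeq x m)]
  split_ifs
  · exact kostka_comp_extendDomain hsh π fun m => (extendSeq x m).toNat
  · rfl

theorem hatSeq_conj_apply {n : ℕ} {μ0 ν0 μ1 ν1 : Fin n → ℕ} {σ w : Perm (Fin n)} {j : Fin n}
    (hshift : ((σ j : ℕ) : ℤ) - (σ (w⁻¹ j) : ℕ) = (j : ℕ) - (w⁻¹ j : ℕ))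
    (hrow : (μ1 (σ j) : ℤ) - ν1 (σ (w⁻¹ j)) = (μ0 j : ℤ) - ν0 (w⁻¹ j)) :
    hatSeq μ1 ν1 (σ * w * σ⁻¹) (σ j) = hatSeq μ0 ν0 w j := by
  have : (σ * w * σ⁻¹)⁻¹ (σ j) = σ (w⁻¹ j) := by simp [mul_inv_rev, Perm.mul_apply]
  simp only [hatSeq, deltaSeq, this]
  linarith

theorem stmt17_general {n : ℕ} (μ0 ν0 μ1 ν1 : Fin n → ℕ)
    (σ : Perm (Fin n))
    (hσ : ∀ s t : Fin n, SameComp μ0 ν0 s t →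
      (((σ t : ℕ) : ℤ) - ((σ s : ℕ) : ℤ) = ((t : ℕ) : ℤ) - ((s : ℕ) : ℤ)))
    (hrows : ∀ s t : Fin n, SameComp μ0 ν0 s t →
      ((μ1 (σ t) : ℤ) - (ν1 (σ s) : ℤ) = (μ0 t : ℤ) - (ν0 s : ℤ)))
    (w' : Perm (Fin n)) (hw' : ∀ j : Fin n, SameComp μ0 ν0 j (w' j)) :
    (∀ j : Fin n,
        hatSeq μ0 ν0 w' j = hatSeq μ1 ν1 (σ * w' * σ⁻¹) (σ j)) ∧
    ∀ shape : ℕ → ℕ, Antitone shape →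
      kostkaZ shape (extendSeq (hatSeq μ0 ν0 w')) =
        kostkaZ shape (extendSeq (hatSeq μ1 ν1 (σ * w' * σ⁻¹))) := by
  have hhat (j : Fin n) : hatSeq μ0 ν0 w' j = hatSeq μ1 ν1 (σ * w' * σ⁻¹) (σ j) := by
    have hcomp : SameComp μ0 ν0 (w'⁻¹ j) j := by simpa using hw' (w'⁻¹ j)
    exact (hatSeq_conj_apply (hσ _ _ hcomp) (hrows _ _ hcomp)).symm
  refine ⟨hhat, fun shape hsh => ?_⟩
  rw [show hatSeq μ0 ν0 w' = hatSeq μ1 ν1 (σ * w' * σ⁻¹) ∘ σ from funext hhat,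
    kostkaZ_extendSeq_comp hsh]

/-- key step of Proposition A.4: if the skew diagrams of
`μ⁰/ν⁰` and `μ¹/ν¹` have the same connected components, related by a row
permutation `σ` that is order-preserving within each component, then for every
`w'` in the Young subgroup of `μ⁰/ν⁰`,
`(μ⁰+δ-w'(ν⁰+δ))_k = (μ¹+δ-(σw'σ⁻¹)(ν¹+δ))_{σ(k)}`, and hence the
corresponding Kostka numbers agree for all partitions. -/
theorem stmt17 {n : ℕ} (μ0 ν0 μ1 ν1 : Fin n → ℕ)
    (hμ0 : Antitone μ0) (hν0 : Antitone ν0) (hμ1 : Antitone μ1) (hν1 : Antitone ν1)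
    (hle0 : ∀ i, ν0 i ≤ μ0 i) (hle1 : ∀ i, ν1 i ≤ μ1 i)
    (σ : Perm (Fin n))
    (hσ : ∀ s t : Fin n, SameComp μ0 ν0 s t →
      (((σ t : ℕ) : ℤ) - ((σ s : ℕ) : ℤ) = ((t : ℕ) : ℤ) - ((s : ℕ) : ℤ)))
    (hrows : ∀ s t : Fin n, SameComp μ0 ν0 s t →
      ((μ1 (σ t) : ℤ) - (ν1 (σ s) : ℤ) = (μ0 t : ℤ) - (ν0 s : ℤ)))
    (w' : Perm (Fin n)) (hw' : ∀ j : Fin n, SameComp μ0 ν0 j (w' j)) :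
    (∀ j : Fin n,
        hatSeq μ0 ν0 w' j = hatSeq μ1 ν1 (σ * w' * σ⁻¹) (σ j)) ∧
    ∀ shape : ℕ → ℕ, Antitone shape →
      kostkaZ shape (extendSeq (hatSeq μ0 ν0 w')) =
        kostkaZ shape (extendSeq (hatSeq μ1 ν1 (σ * w' * σ⁻¹))) :=
  stmt17_general μ0 ν0 μ1 ν1 σ hσ hrows w' hw'
end

section
/- Let h : [n] → [n] be the Hessenberg function of a skew shape μ/ν with no empty rows, let k ≥ 0 and θ = (N-k,1,...,1) ⊢ N = |μ/ν|. Writing the decomposition Γ^θ_{μ/ν} = Σ_J c_J Γ_{h^J} over distinct Hessenberg functions h^J, each multiplicity is c_J = C(a, b) where a = |{ i ∈ [n-1] : μ_{h(i)} - ν_i + i - h(i) > 0 }| and b = k - |{ i ∈ [n-1] : h(i) ≠ h^J(i) }|; equivalently, for a fixed function g of the form h^{J₀}, the number of k-subsets J ⊆ [n-1] with h^J = g equals C(a, b) with b = k - |{i : g(i) ≠ h(i)}|. -/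
open Equiv

/-- Corollary 4.3, multiplicity formula: for `g = h^{J₀}`,
the number of size-`k` subsets `J ⊆ [n-1]` with `h^J = g` equals `C(a, b)`,
where `a = |{ i ∈ [n-1] : μ_{h(i)} - ν_i + i - h(i) > 0 }|` and
`b = k - |{ i : g(i) ≠ h(i) }|`. -/
theorem stmt19 {n k : ℕ} (μ ν : Fin n → ℕ) (hμ : Antitone μ) (hν : Antitone ν)
    (hlt : ∀ i, ν i < μ i) (h : Fin n → Fin n) (hh : IsHessOf μ ν h)
    (J0 : Finset (Fin n)) (hJ0 : ∀ i ∈ J0, (i : ℕ) < n - 1) (hJ0c : J0.card = k)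
    (g : Fin n → Fin n) (hg : g = hJfun μ ν h J0)
    (a b : ℕ)
    (ha : a = (Finset.univ.filter (fun i : Fin n =>
        (i : ℕ) < n - 1 ∧ ν i + ((h i : ℕ)) < μ (h i) + (i : ℕ))).card)
    (hb : b = k - (Finset.univ.filter (fun i : Fin n => g i ≠ h i)).card) :
    (Finset.univ.filter (fun J : Finset (Fin n) =>
        (∀ i ∈ J, (i : ℕ) < n - 1) ∧ J.card = k ∧ hJfun μ ν h J = g)).card
      = a.choose b := by

  classical
  subst hg
  -- basic facts
  have hile : ∀ i : Fin n, (i : ℕ) ≤ ((h i : ℕ)) := by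
    intro i
    have := (hh i).2 i (by have := (hlt i).le; omega)
    exact this
  have hpos : ∀ i : Fin n, μ (h i) + (i : ℕ) = ν i + ((h i : ℕ)) → 0 < ((h i : ℕ)) := by
    intro i heq
    by_contra hc
    push_neg at hc
    have h0 : ((h i : ℕ)) = 0 := Nat.le_zero.mp hc
    have hi0 : (i : ℕ) = 0 := by have := hile i; omega
    have : h i = i := Fin.ext (by omega)
    rw [this] at heq
    have := hlt i
    omega
  have key : ∀ i : Fin n, μ (h i) + (i : ℕ) = ν i + ((h i : ℕ)) →
      (⟨((h i : ℕ)) - 1, Nat.lt_of_le_of_lt (Nat.sub_le _ _) (h i).isLt⟩ : Fin n) ≠ h i := by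
    intro i heq
    have := hpos i heq
    exact Fin.ne_of_val_ne (by simp; omega)
  set E : Finset (Fin n) := Finset.univ.filter (fun i =>
    (i : ℕ) < n - 1 ∧ μ (h i) + (i : ℕ) = ν i + ((h i : ℕ))) with hE
  set A : Finset (Fin n) := Finset.univ.filter (fun i : Fin n =>
        (i : ℕ) < n - 1 ∧ ν i + ((h i : ℕ)) < μ (h i) + (i : ℕ)) with hA
  have hAE : Disjoint A E := by
    rw [Finset.disjoint_left]
    intro i hiA hiE
    rw [hA, Finset.mem_filter] at hiA
    rw [hE, Finset.mem_filter] at hiE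
    omega
  -- the key equivalence
  have hiff : ∀ J : Finset (Fin n), (∀ i ∈ J, (i : ℕ) < n - 1) →
      (hJfun μ ν h J = hJfun μ ν h J0 ↔ J ∩ E = J0 ∩ E) := by
    intro J hJ
    constructor
    · intro hfn
      ext i
      simp only [Finset.mem_inter, hE, Finset.mem_filter, Finset.mem_univ, true_and]
      have hfi := congrFun hfn i
      constructor
      · rintro ⟨hiJ, hlt', heq⟩
        refine ⟨?_, hlt', heq⟩
        unfold hJfun at hfi
        rw [if_pos ⟨hiJ, heq⟩] at hfi
        by_contra hiJ0
        rw [if_neg (by tauto)] at hfi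
        exact key i heq hfi
      · rintro ⟨hiJ0, hlt', heq⟩
        refine ⟨?_, hlt', heq⟩
        unfold hJfun at hfi
        by_contra hiJ
        rw [if_neg (fun hc => hiJ hc.1), if_pos ⟨hiJ0, heq⟩] at hfi
        exact key i heq hfi.symm
    · intro hJE
      funext i
      unfold hJfun
      by_cases heq : μ (h i) + (i : ℕ) = ν i + ((h i : ℕ))
      · have hmem : i ∈ J ↔ i ∈ J0 := by
          by_cases hlt' : (i : ℕ) < n - 1
          · have := Finset.ext_iff.mp hJE i
            simp only [Finset.mem_inter, hE, Finset.mem_filter, Finset.mem_univ,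
              true_and] at this
            constructor
            · intro hi; exact ((this.mp ⟨hi, hlt', heq⟩).1)
            · intro hi; exact ((this.mpr ⟨hi, hlt', heq⟩).1)
          · constructor
            · intro hi; exact absurd (hJ i hi) hlt'
            · intro hi; exact absurd (hJ0 i hi) hlt'
        by_cases hi : i ∈ J
        · rw [if_pos ⟨hi, heq⟩, if_pos ⟨hmem.mp hi, heq⟩]
        · rw [if_neg (by tauto), if_neg (by rw [← hmem] at *; tauto)]
      · rw [if_neg (by tauto), if_neg (by tauto)]
  -- identify b
  have hfilt : (Finset.univ.filter (fun i : Fin n => hJfun μ ν h J0 i ≠ h i)) = J0 ∩ E := by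
    ext i
    simp only [Finset.mem_filter, Finset.mem_univ, true_and, Finset.mem_inter, hE]
    constructor
    · intro hne
      unfold hJfun at hne
      by_cases hc : i ∈ J0 ∧ μ (h i) + (i : ℕ) = ν i + ((h i : ℕ))
      · exact ⟨hc.1, hJ0 i hc.1, hc.2⟩
      · rw [if_neg hc] at hne; exact absurd rfl hne
    · rintro ⟨hiJ0, _, heq⟩
      unfold hJfun
      rw [if_pos ⟨hiJ0, heq⟩]
      exact key i heq
  have hmk : (J0 ∩ E).card ≤ k := hJ0c ▸ Finset.card_le_card Finset.inter_subset_left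
  have hbval : b = k - (J0 ∩ E).card := by rw [hb, hfilt]
  -- bijection with powersetCard
  have hcard : (Finset.univ.filter (fun J : Finset (Fin n) =>
        (∀ i ∈ J, (i : ℕ) < n - 1) ∧ J.card = k ∧ hJfun μ ν h J = hJfun μ ν h J0)).card
      = (A.powersetCard b).card := by
    apply Finset.card_bij' (fun J _ => J \ E) (fun T _ => T ∪ (J0 ∩ E))
    · intro J hJ
      rw [Finset.mem_filter] at hJ
      obtain ⟨-, hsub, hk, hfn⟩ := hJ
      have hJE : J ∩ E = J0 ∩ E := (hiff J hsub).mp hfn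
      rw [Finset.mem_powersetCard]
      constructor
      · intro i hi
        rw [Finset.mem_sdiff] at hi
        rw [hA, Finset.mem_filter]
        have hlt' : (i : ℕ) < n - 1 := hsub i hi.1
        have hni : ¬ ((i : ℕ) < n - 1 ∧ μ (h i) + (i : ℕ) = ν i + ((h i : ℕ))) := by
          intro hcon
          exact hi.2 (by rw [hE]; simp only [Finset.mem_filter, Finset.mem_univ, true_and]; exact hcon)
        have hle := (hh i).1
        refine ⟨Finset.mem_univ i, hlt', by omega⟩
      · have := Finset.card_inter_add_card_sdiff J E
        rw [hJE] at this
        omega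
    · intro T hT
      rw [Finset.mem_powersetCard] at hT
      obtain ⟨hTA, hTb⟩ := hT
      have hTE : Disjoint T E := Finset.disjoint_of_subset_left hTA hAE
      rw [Finset.mem_filter]
      refine ⟨Finset.mem_univ _, ?_, ?_, ?_⟩
      · intro i hi
        rw [Finset.mem_union] at hi
        rcases hi with hi | hi
        · have := hTA hi
          rw [hA, Finset.mem_filter] at this
          exact this.2.1
        · exact hJ0 i (Finset.mem_inter.mp hi).1
      · rw [Finset.card_union_of_disjoint
          (Finset.disjoint_of_subset_right Finset.inter_subset_right hTE), hTb]
        omega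
      · apply (hiff _ _).mpr
        · rw [Finset.union_inter_distrib_right,
            Finset.inter_eq_left.mpr Finset.inter_subset_right,
            (Finset.disjoint_iff_inter_eq_empty.mp hTE), Finset.empty_union]
        · intro i hi
          rw [Finset.mem_union] at hi
          rcases hi with hi | hi
          · have := hTA hi
            rw [hA, Finset.mem_filter] at this
            exact this.2.1
          · exact hJ0 i (Finset.mem_inter.mp hi).1
    · intro J hJ
      rw [Finset.mem_filter] at hJ
      obtain ⟨-, hsub, hk, hfn⟩ := hJ
      have hJE : J ∩ E = J0 ∩ E := (hiff J hsub).mp hfn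
      rw [← hJE, Finset.sdiff_union_inter]
    · intro T hT
      rw [Finset.mem_powersetCard] at hT
      have hTE : Disjoint T E := Finset.disjoint_of_subset_left hT.1 hAE
      rw [Finset.union_sdiff_distrib, Finset.sdiff_eq_self_of_disjoint hTE,
        Finset.sdiff_eq_empty_iff_subset.mpr Finset.inter_subset_right,
        Finset.union_empty]
  rw [hcard, Finset.card_powersetCard, ← ha]
end
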